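/- Let d ≥ 1, 0 < ℓ_U ≤ L_U < ∞, 0 < ℓ_V ≤ L_V < ∞, and η > 0. Let U : ℝ^d → ℝ be twice continuously differentiable and of class S_{ℓ_U,L_U}, let V : ℝ^d → ℝ be continuously differentiable and of class S_{ℓ_V,L_V}, and let (q, p) be a random vector in ℝ^d × ℝ^d such that q has law μ, the probability measure with density proportional to e^{−U}. Set q̂ = q + η∇V(p − (η/2)∇U(q)). Then ( E‖ (η²/2) ∫₀¹ ∇²U( (1−s)q̂ + s(q + η∇V(p)) ) ( ∇V(p) − ∇V(p − (η/2)∇U(q)) ) ds ‖₂² )^{1/2} ≤ (L_U^{3/2}·L_V·(d+2)^{1/2}/4)·η³. -/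

import Mathlib

open MeasureTheory

noncomputable section

/-- The class `S_{ℓ,L}`: `ℓ`-strong convexity together with `L`-Lipschitz gradient. -/
def IsSClass (d : ℕ) (ℓ L : ℝ) (W : EuclideanSpace ℝ (Fin d) → ℝ) : Prop :=
  (∀ x₁ x₂ : EuclideanSpace ℝ (Fin d), ∀ t : ℝ, t ∈ Set.Icc (0:ℝ) 1 →
      W ((1 - t) • x₁ + t • x₂) ≤
        (1 - t) * W x₁ + t * W x₂ - ℓ / 2 * (t * (1 - t)) * ‖x₁ - x₂‖ ^ 2) ∧
  (∀ x₁ x₂ : EuclideanSpace ℝ (Fin d), ‖gradient W x₂ - gradient W x₁‖ ≤ L * ‖x₂ - x₁‖)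

/-- The probability measure on `ℝ^d` with density proportional to `e^{-U}`. -/
def gibbs (d : ℕ) (U : EuclideanSpace ℝ (Fin d) → ℝ) : Measure (EuclideanSpace ℝ (Fin d)) :=
  volume.withDensity (fun x => ENNReal.ofReal (Real.exp (-U x) / ∫ y, Real.exp (-U y)))

/-!
The integrand is at most `(η²/2) · L_U · L_V (η/2) ‖∇U(q)‖`, since the Hessian of `U` has operator
norm at most `L_U` and `∇V` is `L_V`-Lipschitz. It remains to show `E‖∇U(q)‖² ≤ L_U d` for
`q ~ μ`. Integrating by parts against `e^{-U}` in the direction of each vector `v` of an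
orthonormal basis gives `∫ ⟪v, ∇U⟫² e^{-U} = ∫ ⟪v, ∇²U v⟫ e^{-U} ≤ L_U ∫ e^{-U}`; strong
convexity gives `e^{-U}` Gaussian tails, which make all the integrands involved integrable.
-/

open Set Filter Topology
open scoped NNReal RealInnerProductSpace

section StrongConvexity

variable {E : Type*} [NormedAddCommGroup E] [NormedSpace ℝ E] {ℓ : ℝ} {U : E → ℝ}

theorem StrongConvexOn.add_fderiv_add_le (hU : StrongConvexOn univ ℓ U) {x : E}
    (hx : DifferentiableAt ℝ U x) (y : E) :
    U x + fderiv ℝ U x (y - x) + ℓ / 2 * ‖y - x‖ ^ 2 ≤ U y := by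
  set v := y - x
  have hderiv : HasDerivAt (fun t : ℝ => U (x + t • v)) (fderiv ℝ U x v) 0 := by
    have hline : HasDerivAt (fun t : ℝ => x + t • v) v 0 := by
      simpa using ((hasDerivAt_id (0 : ℝ)).smul_const v).const_add x
    exact hx.hasFDerivAt.comp_hasDerivAt_of_eq 0 hline (by simp)
  have hslope : Tendsto (fun t : ℝ => t⁻¹ * (U (x + t • v) - U x)) (𝓝[>] 0)
      (𝓝 (fderiv ℝ U x v)) := by
    have := (hasDerivAt_iff_tendsto_slope.1 hderiv).mono_left (nhdsGT_le_nhdsNE 0)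
    refine this.congr fun t => ?_
    simp [slope, smul_eq_mul]
  have hbound : Tendsto (fun t : ℝ => U y - U x - ℓ / 2 * (1 - t) * ‖v‖ ^ 2) (𝓝[>] 0)
      (𝓝 (U y - U x - ℓ / 2 * ‖v‖ ^ 2)) := by
    have : Continuous (fun t : ℝ => U y - U x - ℓ / 2 * (1 - t) * ‖v‖ ^ 2) := by fun_prop
    simpa using (this.tendsto 0).mono_left nhdsWithin_le_nhds
  have hchord : ∀ t ∈ Ioc (0 : ℝ) 1,
      t⁻¹ * (U (x + t • v) - U x) ≤ U y - U x - ℓ / 2 * (1 - t) * ‖v‖ ^ 2 := by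
    rintro t ⟨ht₀, ht₁⟩
    have h := hU.2 (mem_univ x) (mem_univ y) (sub_nonneg.2 ht₁) ht₀.le (sub_add_cancel 1 t)
    have hpt : (1 - t) • x + t • y = x + t • v := by simp only [v]; module
    rw [hpt, norm_sub_rev, smul_eq_mul, smul_eq_mul] at h
    rw [inv_mul_le_iff₀ ht₀]
    nlinarith
  have := le_of_tendsto_of_tendsto hslope hbound
    (eventually_of_mem (Ioc_mem_nhdsGT one_pos) hchord)
  linarith

theorem StrongConvexOn.exp_neg_le (hU : StrongConvexOn univ ℓ U) (hℓ : 0 < ℓ)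
    (h0 : DifferentiableAt ℝ U 0) (y : E) :
    Real.exp (-U y) ≤ Real.exp (‖fderiv ℝ U 0‖ ^ 2 / ℓ - U 0) * Real.exp (-(ℓ / 4) * ‖y‖ ^ 2) := by
  rw [← Real.exp_add, Real.exp_le_exp]
  have htangent := hU.add_fderiv_add_le h0 y
  simp only [sub_zero] at htangent
  have hlin : -(‖fderiv ℝ U 0‖ * ‖y‖) ≤ fderiv ℝ U 0 y :=
    neg_le_of_abs_le ((fderiv ℝ U 0).le_opNorm y)
  -- absorb the linear term into half of the quadratic one
  have hamgm : ‖fderiv ℝ U 0‖ * ‖y‖ ≤ ‖fderiv ℝ U 0‖ ^ 2 / ℓ + ℓ / 4 * ‖y‖ ^ 2 := by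
    rw [div_add' _ _ _ hℓ.ne', le_div_iff₀ hℓ]
    nlinarith [sq_nonneg (‖fderiv ℝ U 0‖ - ℓ / 2 * ‖y‖)]
  nlinarith

end StrongConvexity

section Gaussian

variable {E : Type*} [NormedAddCommGroup E] [InnerProductSpace ℝ E] [FiniteDimensional ℝ E]
  [MeasurableSpace E] [BorelSpace E]

theorem integrable_exp_neg_mul_sq_norm {a : ℝ} (ha : 0 < a) :
    Integrable (fun x : E => Real.exp (-a * ‖x‖ ^ 2)) := by
  have h := (GaussianFourier.integrable_cexp_neg_mul_sq_norm_add (V := E) (b := a)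
    (by simpa using ha) 0 0).norm
  refine h.congr (Eventually.of_forall fun x => ?_)
  simp [Complex.norm_exp, ← Complex.ofReal_pow]

theorem integrable_one_add_sq_norm_mul_exp_neg_mul_sq_norm {a : ℝ} (ha : 0 < a) :
    Integrable (fun x : E => (1 + ‖x‖ ^ 2) * Real.exp (-a * ‖x‖ ^ 2)) := by
  refine ((integrable_exp_neg_mul_sq_norm (E := E) (half_pos ha)).const_mul (1 + 2 / a)).mono'
    (by fun_prop) (Eventually.of_forall fun x => ?_)
  set s := ‖x‖ ^ 2
  have hs : 0 ≤ s := by positivity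
  have hsplit : Real.exp (-a * s) = Real.exp (-(a / 2) * s) * Real.exp (-(a / 2) * s) := by
    rw [← Real.exp_add]; ring_nf
  have hmoment : s * Real.exp (-(a / 2) * s) ≤ 2 / a := by
    have hu := Real.add_one_le_exp (a / 2 * s)
    rw [neg_mul, Real.exp_neg, ← div_eq_mul_inv, div_le_iff₀ (Real.exp_pos _),
      div_mul_eq_mul_div, le_div_iff₀ ha]
    nlinarith
  have hdecay : Real.exp (-(a / 2) * s) ≤ 1 := Real.exp_le_one_iff.2 (by nlinarith)
  rw [Real.norm_eq_abs, abs_of_nonneg (by positivity), hsplit]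
  nlinarith [Real.exp_pos (-(a / 2) * s)]

theorem StrongConvexOn.integrable_mul_exp_neg {ℓ C : ℝ} {U g : E → ℝ}
    (hU : StrongConvexOn univ ℓ U) (hℓ : 0 < ℓ) (hdiff : Differentiable ℝ U)
    (hg : AEStronglyMeasurable g) (hgC : ∀ x, |g x| ≤ C * (1 + ‖x‖ ^ 2)) :
    Integrable (fun x => g x * Real.exp (-U x)) := by
  set K := Real.exp (‖fderiv ℝ U 0‖ ^ 2 / ℓ - U 0)
  refine ((integrable_one_add_sq_norm_mul_exp_neg_mul_sq_norm (E := E)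
    (by positivity : 0 < ℓ / 4)).const_mul (C * K)).mono'
    (hg.mul (hdiff.continuous.neg.rexp).aestronglyMeasurable)
    (Eventually.of_forall fun x => ?_)
  have hρ := hU.exp_neg_le hℓ (hdiff 0) x
  have hC : 0 ≤ C := by nlinarith [abs_nonneg (g x), hgC x, sq_nonneg ‖x‖]
  rw [norm_mul, Real.norm_eq_abs, Real.norm_of_nonneg (Real.exp_pos _).le]
  calc |g x| * Real.exp (-U x)
      ≤ (C * (1 + ‖x‖ ^ 2)) * (K * Real.exp (-(ℓ / 4) * ‖x‖ ^ 2)) :=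
        mul_le_mul (hgC x) hρ (Real.exp_pos _).le (by positivity)
    _ = C * K * ((1 + ‖x‖ ^ 2) * Real.exp (-(ℓ / 4) * ‖x‖ ^ 2)) := by ring

theorem StrongConvexOn.integrable_exp_neg {ℓ : ℝ} {U : E → ℝ} (hU : StrongConvexOn univ ℓ U)
    (hℓ : 0 < ℓ) (hdiff : Differentiable ℝ U) : Integrable fun x => Real.exp (-U x) := by
  simpa using hU.integrable_mul_exp_neg hℓ hdiff (g := fun _ => 1) (C := 1)
    aestronglyMeasurable_const fun x => by simp

end Gaussian

theorem LipschitzWith.sq_norm_apply_le {E F : Type*} [SeminormedAddCommGroup E]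
    [SeminormedAddCommGroup F] {K : ℝ≥0} {f : E → F} (hf : LipschitzWith K f) (x : E) :
    ‖f x‖ ^ 2 ≤ 2 * (‖f 0‖ ^ 2 + K ^ 2) * (1 + ‖x‖ ^ 2) := by
  have hlin : ‖f x‖ ≤ ‖f 0‖ + K * ‖x‖ := by
    have := hf.norm_sub_le x 0
    rw [sub_zero] at this
    linarith [norm_le_norm_add_norm_sub' (f x) (f 0)]
  have h0 : 0 ≤ ‖f x‖ := norm_nonneg _
  nlinarith [sq_nonneg (‖f 0‖ - K * ‖x‖), sq_nonneg ‖f 0‖, sq_nonneg (K * ‖x‖),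
    sq_nonneg (K : ℝ), sq_nonneg ‖x‖, mul_nonneg (sq_nonneg ‖f 0‖) (sq_nonneg ‖x‖)]

theorem LipschitzWith.abs_inner_fderiv_apply_le {E : Type*} [NormedAddCommGroup E]
    [InnerProductSpace ℝ E] {K : ℝ≥0} {G : E → E} (hG : LipschitzWith K G) (x v : E) :
    |⟪v, fderiv ℝ G x v⟫| ≤ K * ‖v‖ ^ 2 :=
  calc |⟪v, fderiv ℝ G x v⟫| ≤ ‖v‖ * (K * ‖v‖) :=
        (abs_real_inner_le_norm _ _).trans (mul_le_mul_of_nonneg_left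
          (((fderiv ℝ G x).le_opNorm v).trans (mul_le_mul_of_nonneg_right
            (norm_fderiv_le_of_lipschitz ℝ hG) (norm_nonneg v))) (norm_nonneg v))
    _ = K * ‖v‖ ^ 2 := by ring

section GibbsIntegrationByParts

variable {E : Type*} [NormedAddCommGroup E] [InnerProductSpace ℝ E] [FiniteDimensional ℝ E]
  [MeasurableSpace E] [BorelSpace E] {ℓ : ℝ} {K : ℝ≥0} {U : E → ℝ}

theorem StrongConvexOn.integrable_sq_inner_gradient_mul_exp_neg (hU : StrongConvexOn univ ℓ U)
    (hℓ : 0 < ℓ) (hUd : Differentiable ℝ U) (hL : LipschitzWith K (gradient U)) (v : E) :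
    Integrable fun x => ⟪v, gradient U x⟫ ^ 2 * Real.exp (-U x) := by
  refine hU.integrable_mul_exp_neg hℓ hUd (C := ‖v‖ ^ 2 * (2 * (‖gradient U 0‖ ^ 2 + K ^ 2)))
    ((continuous_const.inner hL.continuous).pow 2).aestronglyMeasurable fun x => ?_
  rw [abs_of_nonneg (sq_nonneg _), mul_assoc]
  calc ⟪v, gradient U x⟫ ^ 2 ≤ (‖v‖ * ‖gradient U x‖) ^ 2 :=
        sq_le_sq' (neg_le_of_abs_le (abs_real_inner_le_norm _ _)) (real_inner_le_norm _ _)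
    _ ≤ _ := by
        rw [mul_pow]; exact mul_le_mul_of_nonneg_left (hL.sq_norm_apply_le x) (sq_nonneg _)

theorem StrongConvexOn.integrable_inner_fderiv_gradient_mul_exp_neg
    (hU : StrongConvexOn univ ℓ U) (hℓ : 0 < ℓ) (hUd : Differentiable ℝ U)
    (hL : LipschitzWith K (gradient U)) (v : E) :
    Integrable fun x => ⟪v, fderiv ℝ (gradient U) x v⟫ * Real.exp (-U x) :=
  hU.integrable_mul_exp_neg hℓ hUd (C := K * ‖v‖ ^ 2)
    ((measurable_fderiv_apply_const ℝ (gradient U) v).const_inner.aestronglyMeasurable)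
    fun x => (hL.abs_inner_fderiv_apply_le x v).trans
      (le_mul_of_one_le_right (by positivity) (by simp))

theorem integral_sq_inner_gradient_mul_exp_neg (hU : StrongConvexOn univ ℓ U) (hℓ : 0 < ℓ)
    (hUd : Differentiable ℝ U) (hgradd : Differentiable ℝ (gradient U))
    (hL : LipschitzWith K (gradient U)) (v : E) :
    ∫ x, ⟪v, gradient U x⟫ ^ 2 * Real.exp (-U x) =
      ∫ x, ⟪v, fderiv ℝ (gradient U) x v⟫ * Real.exp (-U x) := by
  have hint_sq := hU.integrable_sq_inner_gradient_mul_exp_neg hℓ hUd hL v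
  have hint : Integrable fun x => ⟪v, gradient U x⟫ * Real.exp (-U x) := by
    refine ((hU.integrable_exp_neg hℓ hUd).add hint_sq).mono'
      ((continuous_const.inner hgradd.continuous).mul hUd.continuous.neg.rexp).aestronglyMeasurable
      (Eventually.of_forall fun x => ?_)
    rw [norm_mul, Real.norm_eq_abs, Real.norm_of_nonneg (Real.exp_pos _).le, Pi.add_apply]
    nlinarith [Real.exp_pos (-U x), sq_abs ⟪v, gradient U x⟫,
      sq_nonneg (|⟪v, gradient U x⟫| - 1)]
  have hderiv_inner : ∀ x, HasFDerivAt (fun y => ⟪v, gradient U y⟫)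
      ((innerSL ℝ v).comp (fderiv ℝ (gradient U) x)) x := fun x =>
    (innerSL ℝ v).hasFDerivAt.comp x (hgradd x).hasFDerivAt
  have hderiv_exp : ∀ x, fderiv ℝ (fun y => Real.exp (-U y)) x v =
      -(⟪v, gradient U x⟫ * Real.exp (-U x)) := fun x => by
    have h : HasFDerivAt (fun y => Real.exp (-U y)) _ x := (hUd x).hasFDerivAt.neg.exp
    rw [h.fderiv]
    simp [inner_gradient_right]
    ring
  have hIBP := integral_mul_fderiv_eq_neg_fderiv_mul_of_integrable (μ := volume) (v := v)
    (f := fun y => ⟪v, gradient U y⟫) (g := fun y => Real.exp (-U y))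
    (by simpa only [(hderiv_inner _).fderiv, ContinuousLinearMap.comp_apply, innerSL_apply_apply]
      using hU.integrable_inner_fderiv_gradient_mul_exp_neg hℓ hUd hL v)
    (by simp only [hderiv_exp]
        exact hint_sq.neg.congr (Eventually.of_forall fun x => by simp only [Pi.neg_apply]; ring))
    hint (fun x _ => (hderiv_inner x).differentiableAt) (fun x _ => (hUd x).neg.exp)
  simpa only [hderiv_exp, (hderiv_inner _).fderiv, ContinuousLinearMap.comp_apply,
    innerSL_apply_apply, mul_neg, ← mul_assoc, ← sq, integral_neg, neg_inj] using hIBP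

theorem integral_sq_inner_gradient_mul_exp_neg_le (hU : StrongConvexOn univ ℓ U) (hℓ : 0 < ℓ)
    (hUd : Differentiable ℝ U) (hgradd : Differentiable ℝ (gradient U))
    (hL : LipschitzWith K (gradient U)) (v : E) :
    ∫ x, ⟪v, gradient U x⟫ ^ 2 * Real.exp (-U x) ≤ K * ‖v‖ ^ 2 * ∫ x, Real.exp (-U x) := by
  rw [integral_sq_inner_gradient_mul_exp_neg hU hℓ hUd hgradd hL, ← integral_const_mul]
  refine integral_mono (hU.integrable_inner_fderiv_gradient_mul_exp_neg hℓ hUd hL v)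
    ((hU.integrable_exp_neg hℓ hUd).const_mul _) fun x => ?_
  exact mul_le_mul_of_nonneg_right ((le_abs_self _).trans (hL.abs_inner_fderiv_apply_le x v))
    (Real.exp_pos _).le

theorem integral_sq_norm_gradient_mul_exp_neg_le (hU : StrongConvexOn univ ℓ U) (hℓ : 0 < ℓ)
    (hUd : Differentiable ℝ U) (hgradd : Differentiable ℝ (gradient U))
    (hL : LipschitzWith K (gradient U)) :
    ∫ x, ‖gradient U x‖ ^ 2 * Real.exp (-U x) ≤
      K * Module.finrank ℝ E * ∫ x, Real.exp (-U x) := by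
  set b := stdOrthonormalBasis ℝ E
  have hexpand : ∀ x, ‖gradient U x‖ ^ 2 * Real.exp (-U x) =
      ∑ i, ⟪b i, gradient U x⟫ ^ 2 * Real.exp (-U x) := fun x => by
    simp only [← b.sum_sq_norm_inner_right (gradient U x), Finset.sum_mul, Real.norm_eq_abs, sq_abs]
  simp_rw [hexpand]
  rw [integral_finsetSum _ fun i _ => hU.integrable_sq_inner_gradient_mul_exp_neg hℓ hUd hL (b i)]
  calc ∑ i, ∫ x, ⟪b i, gradient U x⟫ ^ 2 * Real.exp (-U x)
      ≤ ∑ _i, K * 1 * ∫ x, Real.exp (-U x) := Finset.sum_le_sum fun i _ => by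
        simpa [b.norm_eq_one] using integral_sq_inner_gradient_mul_exp_neg_le hU hℓ hUd hgradd hL (b i)
    _ = K * Module.finrank ℝ E * ∫ x, Real.exp (-U x) := by simp; ring

end GibbsIntegrationByParts

section Gibbs

variable {d : ℕ} {U : EuclideanSpace ℝ (Fin d) → ℝ}

theorem integral_gibbs (hU : Continuous U) (f : EuclideanSpace ℝ (Fin d) → ℝ) :
    ∫ x, f x ∂gibbs d U = (∫ x, f x * Real.exp (-U x)) / ∫ x, Real.exp (-U x) := by
  rw [gibbs, integral_withDensity_eq_integral_toReal_smul (by fun_prop)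
    (Eventually.of_forall fun _ => ENNReal.ofReal_lt_top), ← integral_div]
  refine integral_congr_ae (Eventually.of_forall fun x => ?_)
  have hZ : 0 ≤ ∫ x, Real.exp (-U x) := integral_nonneg fun _ => (Real.exp_pos _).le
  simp only [ENNReal.toReal_ofReal (div_nonneg (Real.exp_pos _).le hZ), smul_eq_mul]
  ring

theorem integrable_gibbs (hU : Continuous U) {f : EuclideanSpace ℝ (Fin d) → ℝ}
    (hf : Integrable fun x => f x * Real.exp (-U x)) : Integrable f (gibbs d U) := by
  rw [gibbs, integrable_withDensity_iff (by fun_prop)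
    (Eventually.of_forall fun _ => ENNReal.ofReal_lt_top)]
  refine (hf.div_const (∫ x, Real.exp (-U x))).congr (Eventually.of_forall fun x => ?_)
  have hZ : 0 ≤ ∫ x, Real.exp (-U x) := integral_nonneg fun _ => (Real.exp_pos _).le
  simp only [ENNReal.toReal_ofReal (div_nonneg (Real.exp_pos _).le hZ)]
  ring

variable {Ω : Type*} [MeasurableSpace Ω] {ℙ : Measure Ω} {q : Ω → EuclideanSpace ℝ (Fin d)}
  {ℓ : ℝ} {K : ℝ≥0}

theorem integrable_sq_norm_gradient_of_map_eq_gibbs (hq : AEMeasurable q ℙ)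
    (hlaw : ℙ.map q = gibbs d U) (hU : StrongConvexOn univ ℓ U) (hℓ : 0 < ℓ)
    (hUd : Differentiable ℝ U) (hL : LipschitzWith K (gradient U)) :
    Integrable (fun ω => ‖gradient U (q ω)‖ ^ 2) ℙ := by
  refine Integrable.comp_aemeasurable (g := fun x => ‖gradient U x‖ ^ 2) ?_ hq
  rw [hlaw]
  exact integrable_gibbs hUd.continuous <| hU.integrable_mul_exp_neg hℓ hUd
    (hL.continuous.norm.pow 2).aestronglyMeasurable fun x => by
      rw [abs_of_nonneg (sq_nonneg _)]; exact hL.sq_norm_apply_le x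

theorem integral_sq_norm_gradient_le_of_map_eq_gibbs (hq : AEMeasurable q ℙ)
    (hlaw : ℙ.map q = gibbs d U) (hU : StrongConvexOn univ ℓ U) (hℓ : 0 < ℓ)
    (hUd : Differentiable ℝ U) (hgradd : Differentiable ℝ (gradient U))
    (hL : LipschitzWith K (gradient U)) :
    ∫ ω, ‖gradient U (q ω)‖ ^ 2 ∂ℙ ≤ K * d := by
  rw [← integral_map (f := fun x => ‖gradient U x‖ ^ 2) hq
    (hL.continuous.norm.pow 2).aestronglyMeasurable, hlaw,
    integral_gibbs hUd.continuous]
  refine div_le_of_le_mul₀ (integral_nonneg fun _ => (Real.exp_pos _).le) (by positivity) ?_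
  simpa [finrank_euclideanSpace_fin] using
    integral_sq_norm_gradient_mul_exp_neg_le hU hℓ hUd hgradd hL

end Gibbs

theorem ContDiff.differentiable_gradient {E : Type*} [NormedAddCommGroup E]
    [InnerProductSpace ℝ E] [CompleteSpace E] {U : E → ℝ} (hU : ContDiff ℝ 2 U) :
    Differentiable ℝ (gradient U) :=
  ((InnerProductSpace.toDual ℝ E).symm.contDiff.comp
    (hU.fderiv_right (m := 1) (by norm_num))).differentiable one_ne_zero

theorem sqrt_integral_sq_norm_le_of_norm_le {Ω F G : Type*} [MeasurableSpace Ω] {ℙ : Measure Ω}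
    [NormedAddCommGroup F] [NormedAddCommGroup G] {X : Ω → F} {Y : Ω → G} {C M : ℝ}
    (hC : 0 ≤ C) (hY : Integrable (fun ω => ‖Y ω‖ ^ 2) ℙ) (hM : ∫ ω, ‖Y ω‖ ^ 2 ∂ℙ ≤ M)
    (hXY : ∀ ω, ‖X ω‖ ≤ C * ‖Y ω‖) :
    Real.sqrt (∫ ω, ‖X ω‖ ^ 2 ∂ℙ) ≤ C * Real.sqrt M := by
  calc Real.sqrt (∫ ω, ‖X ω‖ ^ 2 ∂ℙ) ≤ Real.sqrt (C ^ 2 * M) := by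
        refine Real.sqrt_le_sqrt ((integral_mono_of_nonneg (ae_of_all _ fun ω => by positivity)
          (hY.const_mul (C ^ 2)) (ae_of_all _ fun ω => ?_)).trans ?_)
        · simp only [← mul_pow]
          exact pow_le_pow_left₀ (norm_nonneg _) (hXY ω) 2
        · rw [integral_const_mul]; gcongr
    _ = C * Real.sqrt M := by rw [Real.sqrt_mul (sq_nonneg C), Real.sqrt_sq hC]

theorem IsSClass.strongConvexOn {d : ℕ} {ℓ L : ℝ} {W : EuclideanSpace ℝ (Fin d) → ℝ}
    (h : IsSClass d ℓ L W) : StrongConvexOn univ ℓ W := by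
  refine ⟨convex_univ, fun x _ y _ a b _ hb hab => ?_⟩
  obtain rfl : a = 1 - b := by linarith
  have := h.1 x y b ⟨hb, by linarith⟩
  simp only [smul_eq_mul]
  linarith

theorem IsSClass.lipschitzWith_gradient {d : ℕ} {ℓ L : ℝ} {W : EuclideanSpace ℝ (Fin d) → ℝ}
    (h : IsSClass d ℓ L W) : LipschitzWith L.toNNReal (gradient W) :=
  LipschitzWith.of_dist_le' fun x y => by simpa only [dist_eq_norm] using h.2 y x

theorem norm_leapfrog_remainder_le {E : Type*} [NormedAddCommGroup E] [InnerProductSpace ℝ E]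
    [CompleteSpace E] {U V : E → ℝ} {KU KV : ℝ≥0} (hU : LipschitzWith KU (gradient U))
    (hV : LipschitzWith KV (gradient V)) {η : ℝ} (hη : 0 ≤ η) (γ : ℝ → E) (q p : E) :
    ‖(η ^ 2 / 2) • ∫ s in (0:ℝ)..1,
        fderiv ℝ (gradient U) (γ s) (gradient V p - gradient V (p - (η / 2) • gradient U q))‖ ≤
      KU * KV * η ^ 3 / 4 * ‖gradient U q‖ := by
  set w := gradient V p - gradient V (p - (η / 2) • gradient U q)
  have hw : ‖w‖ ≤ KV * (η / 2 * ‖gradient U q‖) := by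
    simpa [norm_smul, abs_of_nonneg hη] using hV.norm_sub_le p (p - (η / 2) • gradient U q)
  have hint : ‖∫ s in (0:ℝ)..1, fderiv ℝ (gradient U) (γ s) w‖ ≤ KU * ‖w‖ := by
    simpa using intervalIntegral.norm_integral_le_of_norm_le_const (a := 0) (b := 1) fun s _ =>
      ((fderiv ℝ (gradient U) (γ s)).le_opNorm w).trans
        (mul_le_mul_of_nonneg_right (norm_fderiv_le_of_lipschitz ℝ hU) (norm_nonneg w))
  rw [norm_smul, Real.norm_of_nonneg (by positivity)]
  calc η ^ 2 / 2 * ‖∫ s in (0:ℝ)..1, fderiv ℝ (gradient U) (γ s) w‖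
      ≤ η ^ 2 / 2 * (KU * (KV * (η / 2 * ‖gradient U q‖))) := by gcongr; exact hint.trans (by gcongr)
    _ = KU * KV * η ^ 3 / 4 * ‖gradient U q‖ := by ring

theorem stmt13_general {d : ℕ}
    {ℓU LU ℓV LV η : ℝ}
    (hℓU : 0 < ℓU) (hLU : ℓU ≤ LU) (hℓV : 0 < ℓV) (hLV : ℓV ≤ LV) (hη : 0 < η)
    {U V : EuclideanSpace ℝ (Fin d) → ℝ}
    (hU : ContDiff ℝ 2 U) (hUS : IsSClass d ℓU LU U)
    (hVS : IsSClass d ℓV LV V)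
    {Ω : Type*} [MeasurableSpace Ω] (ℙ : Measure Ω)
    (q p : Ω → EuclideanSpace ℝ (Fin d))
    (hqp : Measurable fun ω => (q ω, p ω))
    (hlawq : Measure.map q ℙ = gibbs d U) :
    Real.sqrt (∫ ω,
        ‖(η ^ 2 / 2) • ∫ s in (0:ℝ)..1,
            (fderiv ℝ (gradient U)
                ((1 - s) • (q ω + η • gradient V (p ω - (η / 2) • gradient U (q ω)))
                  + s • (q ω + η • gradient V (p ω))))
              (gradient V (p ω) - gradient V (p ω - (η / 2) • gradient U (q ω)))‖ ^ 2 ∂ℙ)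
      ≤ LU ^ ((3:ℝ)/2) * LV * Real.sqrt ((d : ℝ) + 2) / 4 * η ^ 3 := by
  have hLU0 : 0 ≤ LU := by linarith
  have hLV0 : 0 ≤ LV := by linarith
  have hUL := hUS.lipschitzWith_gradient
  have hUd : Differentiable ℝ U := hU.differentiable (by norm_num)
  have hq : AEMeasurable q ℙ := (measurable_fst.comp hqp).aemeasurable
  refine (sqrt_integral_sq_norm_le_of_norm_le (C := LU * LV * η ^ 3 / 4) (by positivity)
    (integrable_sq_norm_gradient_of_map_eq_gibbs hq hlawq hUS.strongConvexOn hℓU hUd hUL)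
    (integral_sq_norm_gradient_le_of_map_eq_gibbs hq hlawq hUS.strongConvexOn hℓU hUd
      hU.differentiable_gradient hUL) fun ω => ?_).trans ?_
  · simpa [hLU0, hLV0] using norm_leapfrog_remainder_le hUL hVS.lipschitzWith_gradient hη.le
      (fun s => (1 - s) • (q ω + η • gradient V (p ω - (η / 2) • gradient U (q ω)))
        + s • (q ω + η • gradient V (p ω))) (q ω) (p ω)
  · have hLU32 : LU ^ ((3:ℝ)/2) = LU * Real.sqrt LU := by
      rw [Real.sqrt_eq_rpow, ← Real.rpow_one_add' hLU0 (by norm_num)]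
      norm_num
    rw [Real.coe_toNNReal _ hLU0, Real.sqrt_mul hLU0, hLU32]
    have hsqrt : Real.sqrt d ≤ Real.sqrt ((d : ℝ) + 2) := Real.sqrt_le_sqrt (by linarith)
    calc LU * LV * η ^ 3 / 4 * (Real.sqrt LU * Real.sqrt d)
        ≤ LU * LV * η ^ 3 / 4 * (Real.sqrt LU * Real.sqrt ((d : ℝ) + 2)) := by gcongr
      _ = _ := by ring

/-- Mean-square bound for the term `T₄` in the decomposition of the leapfrog momentum
error, with the initial position distributed according to `μ`. -/
theorem stmt13 {d : ℕ} (hd : 1 ≤ d)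
    {ℓU LU ℓV LV η : ℝ}
    (hℓU : 0 < ℓU) (hLU : ℓU ≤ LU) (hℓV : 0 < ℓV) (hLV : ℓV ≤ LV) (hη : 0 < η)
    {U V : EuclideanSpace ℝ (Fin d) → ℝ}
    (hU : ContDiff ℝ 2 U) (hUS : IsSClass d ℓU LU U)
    (hV : ContDiff ℝ 1 V) (hVS : IsSClass d ℓV LV V)
    {Ω : Type*} [MeasurableSpace Ω] (ℙ : Measure Ω) [IsProbabilityMeasure ℙ]
    (q p : Ω → EuclideanSpace ℝ (Fin d))
    (hqp : Measurable fun ω => (q ω, p ω))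
    (hlawq : Measure.map q ℙ = gibbs d U) :
    Real.sqrt (∫ ω,
        ‖(η ^ 2 / 2) • ∫ s in (0:ℝ)..1,
            (fderiv ℝ (gradient U)
                ((1 - s) • (q ω + η • gradient V (p ω - (η / 2) • gradient U (q ω)))
                  + s • (q ω + η • gradient V (p ω))))
              (gradient V (p ω) - gradient V (p ω - (η / 2) • gradient U (q ω)))‖ ^ 2 ∂ℙ)
      ≤ LU ^ ((3:ℝ)/2) * LV * Real.sqrt ((d : ℝ) + 2) / 4 * η ^ 3 :=
  stmt13_general hℓU hLU hℓV hLV hη hU hUS hVS ℙ q p hqp hlawq
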